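/- arXiv:2405.09500 — 2 statements merged into one kernel-verified Lean document; each statement's English description precedes it below -/
import Mathlib

section
/- Let C be a nonempty subset of a finite set X, P a probability measure on C, and ε > 0. Define ν(K) = max{P(K ∩ C) - ε, 0} if C ⊄ K and ν(K) = 1 if C ⊆ K. Then ν is a convex capacity on X whose core equals the closed total variation neighborhood {p ∈ Δ(C) : sup_{K ⊆ C} |p(K) - P(K)| ≤ ε}. -/
/-!
Since `P` lives on `C` and `mass P C = 1`, the capacity splits as
`ν K = max (P K - ε) 0 + c · [C ⊆ K]` with `c = 1 - max (1 - ε) 0 ≥ 0`. The first summand is a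
nondecreasing convex function of the additive set function `P`, hence supermodular; the second
is a nonnegative multiple of the unanimity game of `C`, which is supermodular as well.
For the core: `ν C = 1` forces a dominating `p` to live on `C`, and once `p` and `P` both have
mass one on `C`, the upper bound `p K ≤ P K + ε` is the lower bound for the complement `C \ K`.
-/

open Finset

variable {X : Type*} [Fintype X] [DecidableEq X]

/-- Total mass of `p` on a finite subset `K`. -/
def mass (p : X → ℝ) (K : Finset X) : ℝ := ∑ a ∈ K, p a

/-- `p` is a probability mass function on `X`. -/
def IsProb (p : X → ℝ) : Prop := (∀ a, 0 ≤ p a) ∧ ∑ a, p a = 1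

/-- A capacity on the finite set `X`: normalized and monotone set function. -/
def IsCapacity (ν : Finset X → ℝ) : Prop :=
  ν ∅ = 0 ∧ ν Finset.univ = 1 ∧ ∀ ⦃A B : Finset X⦄, A ⊆ B → ν A ≤ ν B

/-- A convex (supermodular) capacity. -/
def IsConvexCap (ν : Finset X → ℝ) : Prop :=
  IsCapacity ν ∧ ∀ A B : Finset X, ν A + ν B ≤ ν (A ∪ B) + ν (A ∩ B)

/-- The core of a capacity: all dominating probability measures. -/
def core (ν : Finset X → ℝ) : Set (X → ℝ) :=
  {p | IsProb p ∧ ∀ K : Finset X, ν K ≤ mass p K}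

section Mass

variable {α : Type*}

lemma mass_mono {p : α → ℝ} (hp : ∀ a, 0 ≤ p a) {A B : Finset α} (h : A ⊆ B) :
    mass p A ≤ mass p B :=
  sum_le_sum_of_subset_of_nonneg h fun a _ _ => hp a

lemma mass_nonneg {p : α → ℝ} (hp : ∀ a, 0 ≤ p a) (A : Finset α) : 0 ≤ mass p A :=
  sum_nonneg fun a _ => hp a

lemma mass_union_add_mass_inter [DecidableEq α] (p : α → ℝ) (A B : Finset α) :
    mass p (A ∪ B) + mass p (A ∩ B) = mass p A + mass p B :=
  sum_union_inter

lemma mass_sdiff_add_mass [DecidableEq α] (p : α → ℝ) {K C : Finset α} (h : K ⊆ C) :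
    mass p (C \ K) + mass p K = mass p C :=
  sum_sdiff h

lemma mass_inter_of_eq_zero [DecidableEq α] {p : α → ℝ} {C : Finset α}
    (hp : ∀ a ∉ C, p a = 0) (K : Finset α) : mass p (K ∩ C) = mass p K :=
  sum_subset inter_subset_left fun a haK ha => hp a fun haC => ha (mem_inter.2 ⟨haK, haC⟩)

lemma forall_abs_mass_sub_le_iff [DecidableEq α] {p P : α → ℝ} {C : Finset α}
    (hp : mass p C = 1) (hP : mass P C = 1) {ε : ℝ} :
    (∀ K ⊆ C, |mass p K - mass P K| ≤ ε) ↔ ∀ K ⊆ C, mass P K - ε ≤ mass p K := by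
  refine ⟨fun h K hK => by linarith [(abs_le.1 (h K hK)).1], fun h K hK => abs_le.2 ⟨?_, ?_⟩⟩
  · linarith [h K hK]
  · have hcompl := h (C \ K) sdiff_subset
    linarith [mass_sdiff_add_mass p hK, mass_sdiff_add_mass P hK]

end Mass

section Prob

variable {α : Type*} [Fintype α]

lemma IsProb.mass_le_one {p : α → ℝ} (hp : IsProb p) (C : Finset α) : mass p C ≤ 1 :=
  hp.2 ▸ mass_mono hp.1 (subset_univ C)

lemma IsProb.mass_eq_one_iff [DecidableEq α] {p : α → ℝ} (hp : IsProb p) (C : Finset α) :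
    mass p C = 1 ↔ ∀ a ∉ C, p a = 0 := by
  have hsplit : mass p C + ∑ a ∈ Cᶜ, p a = 1 := (sum_add_sum_compl C p).trans hp.2
  have hcompl : mass p C = 1 ↔ ∑ a ∈ Cᶜ, p a = 0 :=
    ⟨fun h => by linarith, fun h => by linarith⟩
  rw [hcompl, sum_eq_zero_iff_of_nonneg fun a _ => hp.1 a]
  simp only [mem_compl]

end Prob

lemma max_sub_add_max_sub_le {x y u v ε : ℝ} (hxu : x ≤ u) (hyu : y ≤ u) (hsum : x + y = u + v) :
    max (x - ε) 0 + max (y - ε) 0 ≤ max (u - ε) 0 + max (v - ε) 0 := by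
  rcases max_cases (x - ε) 0 with ⟨h1, h1'⟩ | ⟨h1, h1'⟩ <;>
  rcases max_cases (y - ε) 0 with ⟨h2, h2'⟩ | ⟨h2, h2'⟩ <;>
  rcases max_cases (u - ε) 0 with ⟨h3, h3'⟩ | ⟨h3, h3'⟩ <;>
  rcases max_cases (v - ε) 0 with ⟨h4, h4'⟩ | ⟨h4, h4'⟩ <;>
  rw [h1, h2, h3, h4] <;> linarith

section Capacity

variable {α : Type*} [DecidableEq α]

def tvCapacity (C : Finset α) (P : α → ℝ) (ε : ℝ) (K : Finset α) : ℝ :=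
  if C ⊆ K then 1 else max (mass P (K ∩ C) - ε) 0

lemma tvCapacity_eq_add {C : Finset α} {P : α → ℝ} (hPC : mass P C = 1)
    (hPsupp : ∀ a ∉ C, P a = 0) (ε : ℝ) (K : Finset α) :
    tvCapacity C P ε K =
      max (mass P K - ε) 0 + if C ⊆ K then 1 - max (1 - ε) 0 else 0 := by
  rw [tvCapacity, mass_inter_of_eq_zero hPsupp]
  split_ifs with hCK
  · rw [← mass_inter_of_eq_zero hPsupp, inter_eq_right.2 hCK, hPC]
    ring
  · rw [add_zero]

lemma max_mass_sub_supermodular {P : α → ℝ} (hP : ∀ a, 0 ≤ P a) (ε : ℝ) (A B : Finset α) :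
    max (mass P A - ε) 0 + max (mass P B - ε) 0 ≤
      max (mass P (A ∪ B) - ε) 0 + max (mass P (A ∩ B) - ε) 0 :=
  max_sub_add_max_sub_le (mass_mono hP subset_union_left) (mass_mono hP subset_union_right)
    (mass_union_add_mass_inter P A B).symm

lemma ite_subset_supermodular {c : ℝ} (hc : 0 ≤ c) (C A B : Finset α) :
    ((if C ⊆ A then c else 0) + if C ⊆ B then c else 0) ≤
      (if C ⊆ A ∪ B then c else 0) + if C ⊆ A ∩ B then c else 0 := by
  have hU (h : C ⊆ A ∨ C ⊆ B) : C ⊆ A ∪ B :=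
    h.elim (·.trans subset_union_left) (·.trans subset_union_right)
  split_ifs <;> simp_all [subset_inter_iff]

lemma ite_subset_mono {c : ℝ} (hc : 0 ≤ c) (C : Finset α) {A B : Finset α} (hAB : A ⊆ B) :
    (if C ⊆ A then c else 0) ≤ if C ⊆ B then c else 0 := by
  by_cases hA : C ⊆ A
  · simp [hA, hA.trans hAB]
  · simp only [hA, if_false]
    split_ifs <;> linarith

end Capacity

section Core

variable {α : Type*} [Fintype α] [DecidableEq α]

lemma isConvexCap_tvCapacity {C : Finset α} (hC : C.Nonempty) {P : α → ℝ}
    (hP : ∀ a, 0 ≤ P a) (hPC : mass P C = 1) (hPsupp : ∀ a ∉ C, P a = 0) {ε : ℝ} (hε : 0 < ε) :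
    IsConvexCap (tvCapacity C P ε) := by
  have hc : 0 ≤ 1 - max (1 - ε) 0 := by
    rw [sub_nonneg]
    exact max_le (by linarith) zero_le_one
  refine ⟨⟨?_, ?_, fun A B hAB => ?_⟩, fun A B => ?_⟩
  · simp [tvCapacity, hC.ne_empty, mass, hε.le]
  · simp [tvCapacity]
  · simp only [tvCapacity_eq_add hPC hPsupp]
    exact add_le_add (max_le_max_right 0 (by linarith [mass_mono hP hAB]))
      (ite_subset_mono hc C hAB)
  · simp only [tvCapacity_eq_add hPC hPsupp]
    linarith [max_mass_sub_supermodular hP ε A B, ite_subset_supermodular hc C A B]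

lemma forall_tvCapacity_le_mass_iff {C : Finset α} {P p : α → ℝ} (hp : IsProb p)
    (hPC : mass P C = 1) {ε : ℝ} (hε : 0 ≤ ε) :
    (∀ K, tvCapacity C P ε K ≤ mass p K) ↔
      mass p C = 1 ∧ ∀ K ⊆ C, mass P K - ε ≤ mass p K := by
  constructor
  · intro h
    have hpC : mass p C = 1 :=
      le_antisymm (hp.mass_le_one C) (by simpa [tvCapacity] using h C)
    refine ⟨hpC, fun K hKC => ?_⟩
    by_cases hCK : C ⊆ K
    · rw [Subset.antisymm hKC hCK, hPC, hpC]
      linarith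
    · have hK := h K
      rw [tvCapacity, if_neg hCK, inter_eq_left.2 hKC] at hK
      exact (le_max_left _ _).trans hK
  · rintro ⟨hpC, hlow⟩ K
    unfold tvCapacity
    split_ifs with hCK
    · exact hpC ▸ mass_mono hp.1 hCK
    · exact max_le ((hlow _ inter_subset_right).trans (mass_mono hp.1 inter_subset_left))
        (mass_nonneg hp.1 K)

end Core

/-- The total-variation-neighborhood capacity is convex and its core is the closed
variation neighborhood of P. -/
theorem stmt7 (C : Finset X) (hC : C.Nonempty) (P : X → ℝ)
    (hP : IsProb P ∧ ∀ a ∉ C, P a = 0) (ε : ℝ) (hε : 0 < ε) (ν : Finset X → ℝ)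
    (hν : ∀ K : Finset X,
      ν K = if C ⊆ K then 1 else max (mass P (K ∩ C) - ε) 0) :
    IsConvexCap ν ∧
      core ν = {p | (IsProb p ∧ ∀ a ∉ C, p a = 0) ∧
        ∀ K : Finset X, K ⊆ C → |mass p K - mass P K| ≤ ε} := by
  obtain ⟨hPprob, hPsupp⟩ := hP
  have hPC : mass P C = 1 := (hPprob.mass_eq_one_iff C).2 hPsupp
  obtain rfl : ν = tvCapacity C P ε := funext hν
  refine ⟨isConvexCap_tvCapacity hC hPprob.1 hPC hPsupp hε, Set.ext fun p => ⟨?_, ?_⟩⟩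
  · rintro ⟨hp, hdom⟩
    obtain ⟨hpC, hlow⟩ := (forall_tvCapacity_le_mass_iff hp hPC hε.le).1 hdom
    exact ⟨⟨hp, (hp.mass_eq_one_iff C).1 hpC⟩, (forall_abs_mass_sub_le_iff hpC hPC).2 hlow⟩
  · rintro ⟨⟨hp, hpsupp⟩, htv⟩
    have hpC : mass p C = 1 := (hp.mass_eq_one_iff C).2 hpsupp
    exact ⟨hp, (forall_tvCapacity_le_mass_iff hp hPC hε.le).2
      ⟨hpC, (forall_abs_mass_sub_le_iff hpC hPC).1 htv⟩⟩
end

section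
/- In the updating model, suppose Q with average bias κ_Q ∈ [0,1] rationalizes λ, and there exists K* ⊆ X with λ(K*) < ν(K*−{x⁰}). Then: if x⁰ ∉ K*, κ_Q > 0 (underreaction on average); and if x⁰ ∈ K*, κ_Q < 0 (overreaction on average) — hence in the constrained case κ_Q ∈ [0,1], no rationalization with x⁰ ∈ K* exists. Moreover, if such sets K¹ (with x⁰ ∉ K¹) and K² (with x⁰ ∈ K²) both exist, then no average bias κ_Q rationalizes λ. -/
open Finset

variable {X : Type*} [Fintype X] [DecidableEq X]

/-- Rationalization of λ by the average bias κ. -/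
def RatBias {G : Type*} [AddCommGroup G] [Fintype G] [DecidableEq G]
    (x0 : G) (ν : Finset G → ℝ) (lam : G → ℝ) (κ : ℝ) : Prop :=
  ∀ K : Finset G,
    (1 - κ) * ν (K.image (fun x => x - x0)) + κ * (if x0 ∈ K then 1 else 0) ≤
      mass lam K

/-!
Evaluate the rationalization inequality at `K*` and write `v = ν(K* − {x⁰}) ∈ [0, 1]`. If
`x⁰ ∉ K*` it reads `(1 − κ) v ≤ λ(K*) < v`, so `κ v > 0`; if `x⁰ ∈ K*` it reads
`(1 − κ) v + κ ≤ λ(K*) < v`, so `κ (1 − v) < 0`.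
-/

section Capacity

variable {α : Type*} [Fintype α] {ν : Finset α → ℝ}

theorem IsCapacity.nonneg (hν : IsCapacity ν) (A : Finset α) : 0 ≤ ν A :=
  hν.1 ▸ hν.2.2 (Finset.empty_subset A)

theorem IsCapacity.le_one (hν : IsCapacity ν) (A : Finset α) : ν A ≤ 1 :=
  hν.2.1 ▸ hν.2.2 (Finset.subset_univ A)

end Capacity

namespace RatBias

variable {G : Type*} [AddCommGroup G] [Fintype G] [DecidableEq G]
  {x0 : G} {ν : Finset G → ℝ} {lam : G → ℝ} {κ : ℝ} {K : Finset G}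

theorem pos_of_notMem (hrat : RatBias x0 ν lam κ) (hν : IsCapacity ν)
    (hK : mass lam K < ν (K.image (fun x => x - x0))) (hx0 : x0 ∉ K) : 0 < κ := by
  have h := hrat K
  rw [if_neg hx0] at h
  have hmul : 0 < κ * ν (K.image (fun x => x - x0)) := by linarith
  exact pos_of_mul_pos_left hmul (hν.nonneg _)

theorem neg_of_mem (hrat : RatBias x0 ν lam κ) (hν : IsCapacity ν)
    (hK : mass lam K < ν (K.image (fun x => x - x0))) (hx0 : x0 ∈ K) : κ < 0 := by
  have h := hrat K
  rw [if_pos hx0] at h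
  have hmul : κ * (1 - ν (K.image (fun x => x - x0))) < 0 := by linarith
  exact neg_of_mul_neg_left hmul (sub_nonneg.mpr (hν.le_one _))

end RatBias

theorem stmt18_general {G : Type*} [AddCommGroup G] [Fintype G] [DecidableEq G]
    (x0 : G) (ν : Finset G → ℝ) (hν : IsConvexCap ν)
    (lam : G → ℝ) :
    (∀ Kstar : Finset G, mass lam Kstar < ν (Kstar.image (fun x => x - x0)) →
      (x0 ∉ Kstar → ∀ κ : ℝ, RatBias x0 ν lam κ → 0 < κ) ∧
      (x0 ∈ Kstar → ∀ κ : ℝ, RatBias x0 ν lam κ → κ < 0)) ∧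
    (∀ K1 K2 : Finset G,
      mass lam K1 < ν (K1.image (fun x => x - x0)) →
      mass lam K2 < ν (K2.image (fun x => x - x0)) →
      x0 ∉ K1 → x0 ∈ K2 → ∀ κ : ℝ, ¬ RatBias x0 ν lam κ) := by
  refine ⟨fun K hK => ⟨fun hx0 κ hrat => hrat.pos_of_notMem hν.1 hK hx0,
    fun hx0 κ hrat => hrat.neg_of_mem hν.1 hK hx0⟩, ?_⟩
  intro K1 K2 h1 h2 hx1 hx2 κ hrat
  have hpos := hrat.pos_of_notMem hν.1 h1 hx1
  have hneg := hrat.neg_of_mem hν.1 h2 hx2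
  linarith

/-- Under/overreaction on average: if λ(K*) < ν(K*−{x⁰}) then any rationalizing
average bias is positive when x⁰ ∉ K* and negative when x⁰ ∈ K*; if both kinds of
witnesses exist, no average bias rationalizes λ. -/
theorem stmt18 {G : Type*} [AddCommGroup G] [Fintype G] [DecidableEq G]
    (x0 : G) (ν : Finset G → ℝ) (hν : IsConvexCap ν)
    (lam : G → ℝ) (hlam : IsProb lam) :
    (∀ Kstar : Finset G, mass lam Kstar < ν (Kstar.image (fun x => x - x0)) →
      (x0 ∉ Kstar → ∀ κ : ℝ, RatBias x0 ν lam κ → 0 < κ) ∧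
      (x0 ∈ Kstar → ∀ κ : ℝ, RatBias x0 ν lam κ → κ < 0)) ∧
    (∀ K1 K2 : Finset G,
      mass lam K1 < ν (K1.image (fun x => x - x0)) →
      mass lam K2 < ν (K2.image (fun x => x - x0)) →
      x0 ∉ K1 → x0 ∈ K2 → ∀ κ : ℝ, ¬ RatBias x0 ν lam κ) :=
  stmt18_general x0 ν hν lam
end
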